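/- The number of lattice points of a column-strict plane partition with columns of odd height, corresponding under the standard bijection to a semistandard tableau, equals Σ cells weighted by odd column heights; concretely: if Q is a column-strict plane partition with all non-empty columns of odd height contained in [1,m]×[1,2n-1] (y ≤ m, z ≤ 2n-1), then q^{|Q|} corresponds to a monomial s_λ-term under x_i = q^{2(n-i)+1}, so that Σ_Q q^{|Q|} = Σ_{λ⊆(m^n)} s_λ(q^{2n-1},...,q^3,q). -/

import Mathlib

/-- The Schur polynomial `s_λ(x₁,...,xₙ)`, as a sum over semistandard Young tableaux
of shape `λ` (given as the sequence of row lengths) with entries in `{1,...,n}`. -/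
def schur {K : Type*} [CommRing K] {n : ℕ} (lam : Fin n → ℕ) (x : Fin n → K) : K :=
  ∑ T ∈ Finset.univ.filter
      (fun T : ((i : Fin n) × Fin (lam i)) → Fin n =>
        (∀ (i : Fin n) (j j' : Fin (lam i)), (j : ℕ) ≤ (j' : ℕ) → T ⟨i, j⟩ ≤ T ⟨i, j'⟩) ∧
        (∀ (i i' : Fin n) (j : Fin (lam i)) (j' : Fin (lam i')),
          i < i' → (j : ℕ) = (j' : ℕ) → T ⟨i, j⟩ < T ⟨i', j'⟩)),
    ∏ a : Fin n, x a ^ (Finset.univ.filter (fun c => T c = a)).card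

/-- The height of the column of `Q` at position `(i,j)`. -/
def colHeight (Q : Finset (ℕ × ℕ × ℕ)) (i j : ℕ) : ℕ :=
  (Q.filter (fun p => p.1 = i ∧ p.2.1 = j)).card

/-! ### Auxiliary definitions and lemmas -/

namespace Stmt19Aux

def Closed (Q : Finset (ℕ × ℕ × ℕ)) : Prop :=
  ∀ p ∈ Q, ∀ i j k : ℕ, 1 ≤ i → i ≤ p.1 → 1 ≤ j → j ≤ p.2.1 →
            1 ≤ k → k ≤ p.2.2 → (i, j, k) ∈ Q

def Boxed (m n : ℕ) (Q : Finset (ℕ × ℕ × ℕ)) : Prop :=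
  Q ⊆ Finset.Icc 1 (2*n-1) ×ˢ Finset.Icc 1 m ×ˢ Finset.Icc 1 (2*n-1)

/-- A finite set of positive naturals that is downward closed (within positives)
is an initial segment. -/
lemma seg_eq (s : Finset ℕ) (h1 : ∀ k ∈ s, 1 ≤ k)
    (h2 : ∀ k ∈ s, ∀ k', 1 ≤ k' → k' ≤ k → k' ∈ s) :
    s = Finset.Icc 1 s.card := by
  have hsub : s ⊆ Finset.Icc 1 s.card := by
    intro k hk
    simp only [Finset.mem_Icc]
    refine ⟨h1 k hk, ?_⟩
    have hss : Finset.Icc 1 k ⊆ s := fun k' hk' => by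
      rw [Finset.mem_Icc] at hk'; exact h2 k hk k' hk'.1 hk'.2
    calc k = (Finset.Icc 1 k).card := by simp
      _ ≤ s.card := Finset.card_le_card hss
  exact Finset.eq_of_subset_of_card_le hsub (by simp)

section Struct

variable {m n : ℕ} {Q : Finset (ℕ × ℕ × ℕ)}

lemma Boxed.co (hb : Boxed m n Q) : ∀ p ∈ Q, 1 ≤ p.1 ∧ 1 ≤ p.2.1 ∧ 1 ≤ p.2.2 := by
  intro p hp
  have := hb hp
  simp only [Finset.mem_product, Finset.mem_Icc] at this
  exact ⟨this.1.1, this.2.1.1, this.2.2.1⟩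

lemma Boxed.bounds (hb : Boxed m n Q) :
    ∀ p ∈ Q, p.1 ≤ 2*n-1 ∧ p.2.1 ≤ m ∧ p.2.2 ≤ 2*n-1 := by
  intro p hp
  have := hb hp
  simp only [Finset.mem_product, Finset.mem_Icc] at this
  exact ⟨this.1.2, this.2.1.2, this.2.2.2⟩

variable (hb : Boxed m n Q) (hcl : Closed Q)
  (hstrict : ∀ h i j : ℕ, 1 ≤ h → h < i → (∃ k, (i, j, k) ∈ Q) →
            colHeight Q i j < colHeight Q h j)
  (hodd : ∀ i j : ℕ, (∃ k, (i, j, k) ∈ Q) → Odd (colHeight Q i j))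

include hb hcl

/-- Membership characterization via colHeight. -/
lemma hmem (i j k : ℕ) : (i, j, k) ∈ Q ↔ 1 ≤ k ∧ k ≤ colHeight Q i j := by
  set F := Q.filter (fun p => p.1 = i ∧ p.2.1 = j) with hF
  have hinj : Set.InjOn (fun p : ℕ×ℕ×ℕ => p.2.2) F := by
    intro p hp p' hp' h
    simp only [hF, Finset.coe_filter, Set.mem_setOf_eq] at hp hp'
    obtain ⟨_, h1, h2⟩ := hp; obtain ⟨_, h1', h2'⟩ := hp'
    exact Prod.ext (h1.trans h1'.symm) (Prod.ext (h2.trans h2'.symm) h)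
  set s := F.image (fun p => p.2.2) with hs
  have hcard : s.card = colHeight Q i j := by
    rw [hs, Finset.card_image_of_injOn hinj]; rfl
  have hmem_s : ∀ z, z ∈ s ↔ (i, j, z) ∈ Q := by
    intro z
    simp only [hs, Finset.mem_image]
    constructor
    · rintro ⟨p, hp, rfl⟩
      rw [hF, Finset.mem_filter] at hp
      obtain ⟨hpQ, h1, h2⟩ := hp
      have : p = (i, j, p.2.2) := Prod.ext h1 (Prod.ext h2 rfl)
      rwa [← this]
    · intro h; exact ⟨(i,j,z), by rw [hF, Finset.mem_filter]; exact ⟨h, rfl, rfl⟩, rfl⟩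
  have hseg : s = Finset.Icc 1 s.card := by
    apply seg_eq
    · intro k hk; rw [hmem_s] at hk; exact (hb.co _ hk).2.2
    · intro k hk k' h1 h2
      rw [hmem_s] at hk ⊢
      have h := hb.co _ hk
      exact hcl _ hk i j k' h.1 le_rfl h.2.1 le_rfl h1 h2
  rw [← hmem_s k, hseg, hcard, Finset.mem_Icc]

lemma Hpos_co {i j : ℕ} (h : 0 < colHeight Q i j) :
    1 ≤ i ∧ i ≤ 2*n-1 ∧ 1 ≤ j ∧ j ≤ m := by
  have h1 : (i, j, 1) ∈ Q := (hmem hb hcl i j 1).2 ⟨le_rfl, h⟩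
  have := hb.co _ h1
  have := hb.bounds _ h1
  tauto

lemma Hle (i j : ℕ) : colHeight Q i j ≤ 2*n-1 := by
  by_cases h : 0 < colHeight Q i j
  · have h1 : (i, j, colHeight Q i j) ∈ Q := (hmem hb hcl i j _).2 ⟨h, le_rfl⟩
    exact (hb.bounds _ h1).2.2
  · omega

lemma Hmono_y {i j j' : ℕ} (h1 : 1 ≤ j') (h2 : j' ≤ j) :
    colHeight Q i j ≤ colHeight Q i j' := by
  by_cases h : 0 < colHeight Q i j
  · have hq : (i, j, colHeight Q i j) ∈ Q := (hmem hb hcl i j _).2 ⟨h, le_rfl⟩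
    have hco := hb.co _ hq
    have : (i, j', colHeight Q i j) ∈ Q :=
      hcl _ hq i j' _ hco.1 le_rfl h1 h2 h le_rfl
    exact ((hmem hb hcl _ _ _).1 this).2
  · omega

lemma Hmono_x {i i' j : ℕ} (h1 : 1 ≤ i') (h2 : i' ≤ i) :
    colHeight Q i j ≤ colHeight Q i' j := by
  by_cases h : 0 < colHeight Q i j
  · have hq : (i, j, colHeight Q i j) ∈ Q := (hmem hb hcl i j _).2 ⟨h, le_rfl⟩
    have hco := hb.co _ hq
    have : (i', j, colHeight Q i j) ∈ Q :=
      hcl _ hq i' j _ h1 h2 hco.2.1 le_rfl h le_rfl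
    exact ((hmem hb hcl _ _ _).1 this).2
  · omega

lemma Hpos_ex {i j : ℕ} : 0 < colHeight Q i j ↔ ∃ k, (i, j, k) ∈ Q := by
  constructor
  · intro h; exact ⟨1, (hmem hb hcl i j 1).2 ⟨le_rfl, h⟩⟩
  · rintro ⟨k, hk⟩
    have := (hmem hb hcl i j k).1 hk
    omega

include hstrict hodd

lemma Hstep {h i j : ℕ} (h1 : 1 ≤ h) (h2 : h < i) (h3 : 0 < colHeight Q i j) :
    colHeight Q i j + 2 ≤ colHeight Q h j := by
  have hex : ∃ k, (i, j, k) ∈ Q := (Hpos_ex hb hcl).1 h3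
  have hlt := hstrict h i j h1 h2 hex
  have ho1 := hodd i j hex
  have ho2 := hodd h j ((Hpos_ex hb hcl).1 (by omega))
  obtain ⟨t1, e1⟩ := ho1
  obtain ⟨t2, e2⟩ := ho2
  omega

lemma Hchain {j : ℕ} : ∀ i, 1 ≤ i → 0 < colHeight Q i j →
    colHeight Q i j + 2*(i-1) ≤ colHeight Q 1 j := by
  intro i
  induction i with
  | zero => omega
  | succ i ih =>
    intro _ hpos
    rcases Nat.eq_or_lt_of_le (Nat.one_le_iff_ne_zero.mpr (Nat.succ_ne_zero i)) with h | h
    · obtain rfl : i = 0 := by omega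
      simp
    · have hi1 : 1 ≤ i := by omega
      have hstep := Hstep hb hcl hstrict hodd hi1 (by omega) hpos
      have hposi : 0 < colHeight Q i j := by omega
      have := ih hi1 hposi
      omega

lemma x_le_n {i j : ℕ} (h : 0 < colHeight Q i j) : i ≤ n := by
  have h1 : 1 ≤ i := (Hpos_co hb hcl h).1
  have hc := Hchain hb hcl hstrict hodd i h1 h
  have hle := Hle (Q := Q) (m := m) (n := n) hb hcl 1 j
  omega

end Struct

section Fwd
variable {m n : ℕ}

/-- the number of nonempty columns of `Q` in row `x`. -/
def fwdF (Q : Finset (ℕ × ℕ × ℕ)) (m x : ℕ) : ℕ :=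
  ((Finset.Icc 1 m).filter (fun j => 0 < colHeight Q x j)).card

lemma fwdF_le (Q : Finset (ℕ × ℕ × ℕ)) (m x : ℕ) : fwdF Q m x ≤ m := by
  have := Finset.card_filter_le (Finset.Icc 1 m) (fun j => 0 < colHeight Q x j)
  simpa [fwdF] using this

variable {Q : Finset (ℕ × ℕ × ℕ)} (hb : Boxed m n Q) (hcl : Closed Q)

include hb hcl

lemma filter_eq_Icc_fwdF (x : ℕ) :
    (Finset.Icc 1 m).filter (fun j => 0 < colHeight Q x j) = Finset.Icc 1 (fwdF Q m x) := by
  rw [fwdF]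
  apply seg_eq
  · intro k hk; rw [Finset.mem_filter, Finset.mem_Icc] at hk; exact hk.1.1
  · intro k hk k' h1 h2
    rw [Finset.mem_filter, Finset.mem_Icc] at hk ⊢
    refine ⟨⟨h1, le_trans h2 hk.1.2⟩, ?_⟩
    have := Hmono_y hb hcl h1 h2 (i := x)
    omega

lemma Hpos_iff {x j : ℕ} :
    0 < colHeight Q x j ↔ 1 ≤ j ∧ j ≤ fwdF Q m x := by
  constructor
  · intro h
    have hc := Hpos_co hb hcl h
    have : j ∈ (Finset.Icc 1 m).filter (fun j => 0 < colHeight Q x j) := by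
      rw [Finset.mem_filter, Finset.mem_Icc]; exact ⟨⟨hc.2.2.1, hc.2.2.2⟩, h⟩
    rw [filter_eq_Icc_fwdF hb hcl, Finset.mem_Icc] at this
    exact this
  · intro h
    have : j ∈ Finset.Icc 1 (fwdF Q m x) := Finset.mem_Icc.2 h
    rw [← filter_eq_Icc_fwdF hb hcl, Finset.mem_filter] at this
    exact this.2

lemma fwdF_anti {x x' : ℕ} (h1 : 1 ≤ x') (h2 : x' ≤ x) : fwdF Q m x ≤ fwdF Q m x' := by
  apply Finset.card_le_card
  intro j hj
  rw [Finset.mem_filter] at hj ⊢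
  exact ⟨hj.1, lt_of_lt_of_le hj.2 (Hmono_x hb hcl h1 h2)⟩

end Fwd

/-- the forward map: the shape. -/
def fwdf (Q : Finset (ℕ × ℕ × ℕ)) (m : ℕ) {n : ℕ} (_hn : 0 < n) : Fin n → Fin (m+1) :=
  fun i => ⟨fwdF Q m ((i : ℕ)+1), Nat.lt_succ_of_le (fwdF_le Q m _)⟩

/-- the forward map: the tableau. -/
def fwdT (Q : Finset (ℕ × ℕ × ℕ)) (m : ℕ) {n : ℕ} (hn : 0 < n) :
    ((i : Fin n) × Fin ((fwdf Q m hn i : ℕ))) → Fin n :=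
  fun c => ⟨n - 1 - colHeight Q ((c.1 : ℕ)+1) ((c.2 : ℕ)+1) / 2, by omega⟩

lemma fwdf_coe (Q : Finset (ℕ × ℕ × ℕ)) (m : ℕ) {n : ℕ} (hn : 0 < n) (i : Fin n) :
    (fwdf Q m hn i : ℕ) = fwdF Q m ((i : ℕ)+1) := rfl

lemma fwdT_coe (Q : Finset (ℕ × ℕ × ℕ)) (m : ℕ) {n : ℕ} (hn : 0 < n)
    (c : (i : Fin n) × Fin ((fwdf Q m hn i : ℕ))) :
    (fwdT Q m hn c : ℕ) = n - 1 - colHeight Q ((c.1 : ℕ)+1) ((c.2 : ℕ)+1) / 2 := rfl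

section Bwd
variable {m n : ℕ}

open Classical in
/-- the backward map. -/
noncomputable def bwdQ {m n : ℕ} (f : Fin n → Fin (m+1))
    (T : ((i : Fin n) × Fin ((f i : ℕ))) → Fin n) : Finset (ℕ × ℕ × ℕ) :=
  (Finset.Icc 1 (2*n-1) ×ˢ Finset.Icc 1 m ×ˢ Finset.Icc 1 (2*n-1)).filter
    (fun p => ∃ (hx : p.1 - 1 < n) (hy : p.2.1 - 1 < (f ⟨p.1-1, hx⟩ : ℕ)),
      p.2.2 ≤ 2*(n - 1 - (T ⟨⟨p.1-1, hx⟩, ⟨p.2.1-1, hy⟩⟩ : ℕ)) + 1)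

lemma mem_bwdQ {f : Fin n → Fin (m+1)} {T : ((i : Fin n) × Fin ((f i : ℕ))) → Fin n}
    {x y z : ℕ} :
    (x, y, z) ∈ bwdQ f T ↔ 1 ≤ x ∧ 1 ≤ y ∧ 1 ≤ z ∧
      ∃ (hx : x - 1 < n) (hy : y - 1 < (f ⟨x-1, hx⟩ : ℕ)),
        z ≤ 2*(n - 1 - (T ⟨⟨x-1, hx⟩, ⟨y-1, hy⟩⟩ : ℕ)) + 1 := by
  classical
  rw [bwdQ, Finset.mem_filter]
  simp only [Finset.mem_product, Finset.mem_Icc]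
  constructor
  · rintro ⟨⟨⟨hx1, _⟩, ⟨hy1, _⟩, ⟨hz1, _⟩⟩, h⟩
    exact ⟨hx1, hy1, hz1, h⟩
  · rintro ⟨hx1, hy1, hz1, hx, hy, hz⟩
    have hfm : (f ⟨x-1, hx⟩ : ℕ) ≤ m := Nat.lt_succ_iff.mp (f ⟨x-1,hx⟩).isLt
    have hT : (T ⟨⟨x-1, hx⟩, ⟨y-1, hy⟩⟩ : ℕ) < n := (T _).isLt
    exact ⟨⟨⟨hx1, by omega⟩, ⟨hy1, by omega⟩, hz1, by omega⟩, hx, hy, hz⟩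

variable {Q : Finset (ℕ × ℕ × ℕ)}

lemma colHeight_eq (hb : Boxed m n Q) (hcl : Closed Q) {x y v : ℕ}
    (h0 : v = 0 ∨ (x, y, v) ∈ Q) (h1 : (x, y, v+1) ∉ Q) : colHeight Q x y = v := by
  rw [hmem hb hcl] at h1
  rcases h0 with rfl | h0
  · omega
  · rw [hmem hb hcl] at h0
    omega

variable {f : Fin n → Fin (m+1)} {T : ((i : Fin n) × Fin ((f i : ℕ))) → Fin n}
  (hf : ∀ i j : Fin n, i ≤ j → f j ≤ f i)
  (hT1 : ∀ (i : Fin n) (j j' : Fin ((f i : ℕ))), (j : ℕ) ≤ (j' : ℕ) → T ⟨i, j⟩ ≤ T ⟨i, j'⟩)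
  (hT2 : ∀ (i i' : Fin n) (j : Fin ((f i : ℕ))) (j' : Fin ((f i' : ℕ))),
          i < i' → (j : ℕ) = (j' : ℕ) → T ⟨i, j⟩ < T ⟨i', j'⟩)

lemma bwd_boxed : Boxed m n (bwdQ f T) := Finset.filter_subset _ _

include hf hT1 hT2 in
lemma T_mono (i i' : Fin n) (hii : i ≤ i') (j j' : ℕ) (hj : j < (f i : ℕ))
    (hj' : j' < (f i' : ℕ)) (hjj : j ≤ j') :
    T ⟨i, ⟨j, hj⟩⟩ ≤ T ⟨i', ⟨j', hj'⟩⟩ := by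
  have hfle : (f i' : ℕ) ≤ (f i : ℕ) := hf i i' hii
  have hj'i : j' < (f i : ℕ) := lt_of_lt_of_le hj' hfle
  have h1 : T ⟨i, ⟨j, hj⟩⟩ ≤ T ⟨i, ⟨j', hj'i⟩⟩ := hT1 i _ _ hjj
  rcases eq_or_lt_of_le hii with rfl | hlt
  · exact h1
  · exact le_of_lt (lt_of_le_of_lt h1 (hT2 i i' ⟨j', hj'i⟩ ⟨j', hj'⟩ hlt rfl))

include hf hT1 hT2 in
lemma bwd_closed : Closed (bwdQ f T) := by
  rintro ⟨x, y, z⟩ hp i j k hi1 hix hj1 hjy hk1 hkz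
  dsimp only at hix hjy hkz
  rw [mem_bwdQ] at hp ⊢
  obtain ⟨hx1, hy1, hz1, hx, hy, hz⟩ := hp
  have hxi : i - 1 < n := by omega
  have hfle : (f ⟨x-1, hx⟩ : ℕ) ≤ (f ⟨i-1, hxi⟩ : ℕ) :=
    hf _ _ (by simp only [Fin.mk_le_mk]; omega)
  have hyj : j - 1 < (f ⟨i-1, hxi⟩ : ℕ) := by omega
  refine ⟨hi1, hj1, hk1, hxi, hyj, ?_⟩
  have hTle : (T ⟨⟨i-1, hxi⟩, ⟨j-1, hyj⟩⟩ : ℕ) ≤ (T ⟨⟨x-1, hx⟩, ⟨y-1, hy⟩⟩ : ℕ) :=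
    T_mono hf hT1 hT2 _ _ (by simp only [Fin.mk_le_mk]; omega) _ _ _ _ (by omega)
  omega

include hf hT1 hT2 in
lemma bwd_colHeight_pos (x y : ℕ) (hx1 : 1 ≤ x) (hy1 : 1 ≤ y) (hx : x - 1 < n)
    (hy : y - 1 < (f ⟨x-1, hx⟩ : ℕ)) :
    colHeight (bwdQ f T) x y = 2*(n - 1 - (T ⟨⟨x-1, hx⟩, ⟨y-1, hy⟩⟩ : ℕ)) + 1 := by
  apply colHeight_eq (bwd_boxed) (bwd_closed hf hT1 hT2)
  · right
    rw [mem_bwdQ]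
    exact ⟨hx1, hy1, by omega, hx, hy, le_rfl⟩
  · rw [mem_bwdQ]
    rintro ⟨-, -, -, hx', hy', hle⟩
    have : T ⟨⟨x-1, hx'⟩, ⟨y-1, hy'⟩⟩ = T ⟨⟨x-1, hx⟩, ⟨y-1, hy⟩⟩ := rfl
    rw [this] at hle
    omega

include hf hT1 hT2 in
lemma bwd_pos_iff (x y : ℕ) :
    0 < colHeight (bwdQ f T) x y ↔
      1 ≤ x ∧ 1 ≤ y ∧ ∃ hx : x - 1 < n, y - 1 < (f ⟨x-1, hx⟩ : ℕ) := by
  constructor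
  · intro h
    have h1 : (x, y, 1) ∈ bwdQ f T :=
      (hmem (bwd_boxed) (bwd_closed hf hT1 hT2) x y 1).2 ⟨le_rfl, h⟩
    rw [mem_bwdQ] at h1
    obtain ⟨hx1, hy1, -, hx, hy, -⟩ := h1
    exact ⟨hx1, hy1, hx, hy⟩
  · rintro ⟨hx1, hy1, hx, hy⟩
    rw [bwd_colHeight_pos hf hT1 hT2 x y hx1 hy1 hx hy]
    omega

include hf hT1 hT2 in
lemma bwd_strict (h i j : ℕ) (hh1 : 1 ≤ h) (hhi : h < i)
    (hex : ∃ k, (i, j, k) ∈ bwdQ f T) :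
    colHeight (bwdQ f T) i j < colHeight (bwdQ f T) h j := by
  obtain ⟨k, hk⟩ := hex
  rw [mem_bwdQ] at hk
  obtain ⟨hi1, hj1, -, hx, hy, -⟩ := hk
  have hxh : h - 1 < n := by omega
  have hfle : (f ⟨i-1, hx⟩ : ℕ) ≤ (f ⟨h-1, hxh⟩ : ℕ) :=
    hf _ _ (by simp only [Fin.mk_le_mk]; omega)
  have hyh : j - 1 < (f ⟨h-1, hxh⟩ : ℕ) := by omega
  rw [bwd_colHeight_pos hf hT1 hT2 i j hi1 hj1 hx hy,
      bwd_colHeight_pos hf hT1 hT2 h j hh1 hj1 hxh hyh]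
  have hTlt : (T ⟨⟨h-1, hxh⟩, ⟨j-1, hyh⟩⟩ : ℕ) < (T ⟨⟨i-1, hx⟩, ⟨j-1, hy⟩⟩ : ℕ) :=
    hT2 _ _ _ _ (by simp only [Fin.mk_lt_mk]; omega) rfl
  have := (T ⟨⟨i-1, hx⟩, ⟨j-1, hy⟩⟩).isLt
  omega

include hf hT1 hT2 in
lemma bwd_odd (i j : ℕ) (hex : ∃ k, (i, j, k) ∈ bwdQ f T) :
    Odd (colHeight (bwdQ f T) i j) := by
  obtain ⟨k, hk⟩ := hex
  rw [mem_bwdQ] at hk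
  obtain ⟨hi1, hj1, -, hx, hy, -⟩ := hk
  rw [bwd_colHeight_pos hf hT1 hT2 i j hi1 hj1 hx hy]
  exact ⟨_, by ring⟩

include hf hT1 hT2 in
lemma fwdF_bwd (i : Fin n) : fwdF (bwdQ f T) m ((i : ℕ) + 1) = (f i : ℕ) := by
  have hfm : (f i : ℕ) ≤ m := Nat.lt_succ_iff.mp (f i).isLt
  have hkey : ((Finset.Icc 1 m).filter (fun j => 0 < colHeight (bwdQ f T) ((i : ℕ)+1) j))
      = Finset.Icc 1 (f i : ℕ) := by
    ext j
    rw [Finset.mem_filter, Finset.mem_Icc, Finset.mem_Icc, bwd_pos_iff hf hT1 hT2]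
    have hfin : ∀ hx : (i : ℕ) + 1 - 1 < n, (⟨(i : ℕ) + 1 - 1, hx⟩ : Fin n) = i :=
      fun hx => Fin.ext rfl
    constructor
    · rintro ⟨⟨h1, h2⟩, -, -, hx, hy⟩
      rw [hfin hx] at hy
      exact ⟨h1, by omega⟩
    · rintro ⟨h1, h2⟩
      refine ⟨⟨h1, by omega⟩, by omega, h1, by omega, ?_⟩
      rw [hfin (by omega)]
      omega
  rw [fwdF, hkey, Nat.card_Icc]
  omega

end Bwd

lemma sigma_mk_eq {n m : ℕ} {f f' : Fin n → Fin (m+1)} (h : f = f')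
    {T : ((i : Fin n) × Fin ((f i : ℕ))) → Fin n}
    {T' : ((i : Fin n) × Fin ((f' i : ℕ))) → Fin n}
    (hT : ∀ (i : Fin n) (j : ℕ) (hj : j < (f i : ℕ)) (hj' : j < (f' i : ℕ)),
        T ⟨i, ⟨j, hj⟩⟩ = T' ⟨i, ⟨j, hj'⟩⟩) :
    (⟨f, T⟩ : Σ g : Fin n → Fin (m+1), ((i : Fin n) × Fin ((g i : ℕ))) → Fin n)
      = ⟨f', T'⟩ := by
  subst h
  congr 1
  funext c
  obtain ⟨i, j⟩ := c
  exact hT i j.1 j.2 j.2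

lemma sum_Icc_one {M : Type*} [AddCommMonoid M] (N : ℕ) (g : ℕ → M) :
    ∑ y ∈ Finset.Icc 1 N, g y = ∑ j : Fin N, g ((j : ℕ)+1) := by
  rw [Fin.sum_univ_eq_sum_range (fun j => g (j+1)) N]
  induction N with
  | zero => simp
  | succ N ih => rw [Finset.sum_Icc_succ_top (by omega), ih, Finset.sum_range_succ]

lemma weight_eq {α : Type*} [Fintype α] {n : ℕ} (T : α → Fin n) (e : Fin n → ℕ)
    {R : Type*} [CommRing R] (q : R) :
    ∏ a : Fin n, (q ^ (e a)) ^ (Finset.univ.filter (fun c => T c = a)).card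
      = q ^ (∑ c : α, e (T c)) := by
  classical
  calc ∏ a : Fin n, (q ^ e a) ^ (Finset.univ.filter (fun c => T c = a)).card
      = ∏ a : Fin n, q ^ (∑ c ∈ Finset.univ.filter (fun c => T c = a), e (T c)) := by
        apply Finset.prod_congr rfl; intro a _
        rw [← pow_mul]
        congr 1
        rw [Finset.sum_congr rfl (fun c hc => by rw [(Finset.mem_filter.1 hc).2]),
            Finset.sum_const, smul_eq_mul]
        ring
    _ = q ^ (∑ a : Fin n, ∑ c ∈ Finset.univ.filter (fun c => T c = a), e (T c)) := by
        rw [Finset.prod_pow_eq_pow_sum]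
    _ = q ^ (∑ c : α, e (T c)) := by rw [Finset.sum_fiberwise]

lemma card_eq_sum {m n : ℕ} {Q : Finset (ℕ × ℕ × ℕ)} (hb : Boxed m n Q) :
    Q.card = ∑ x ∈ Finset.Icc 1 (2*n-1), ∑ y ∈ Finset.Icc 1 m, colHeight Q x y := by
  classical
  rw [Finset.card_eq_sum_card_fiberwise (f := fun p : ℕ×ℕ×ℕ => (p.1, p.2.1))
    (t := Finset.Icc 1 (2*n-1) ×ˢ Finset.Icc 1 m)
    (fun p hp => by
      have := hb hp
      simp only [Finset.mem_coe, Finset.mem_product] at this ⊢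
      exact ⟨this.1, this.2.1⟩)]
  rw [Finset.sum_product]
  refine Finset.sum_congr rfl (fun x _ => Finset.sum_congr rfl (fun y _ => ?_))
  rw [colHeight]
  congr 1
  apply Finset.filter_congr
  intro p _
  simp [Prod.ext_iff]

end Stmt19Aux

open Stmt19Aux in
open scoped Classical in
/-- The generating function `Σ_Q q^{|Q|}` over column-strict plane partitions `Q` with
`y`-coordinates `≤ m`, `z`-coordinates `≤ 2n-1`, all of whose non-empty columns have odd
height (such `Q` automatically have `x`-coordinates `≤ 2n-1`), equals
`Σ_{λ⊆(mⁿ)} s_λ(q^{2n-1}, ..., q³, q)` (partitions encoded as antitone functions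
`Fin n → Fin (m+1)`, specialization `xᵢ = q^{2(n-i)+1}`, 0-indexed `q^{2(n-1-i)+1}`).
A polynomial identity in `q`, stated for an arbitrary element of a commutative ring. -/
theorem stmt19 {R : Type*} [CommRing R] {m n : ℕ} (hm : 0 < m) (hn : 0 < n) (q : R) :
    (∑ Q ∈ ((Finset.Icc 1 (2 * n - 1) ×ˢ Finset.Icc 1 m ×ˢ
          Finset.Icc 1 (2 * n - 1)).powerset.filter
        (fun Q : Finset (ℕ × ℕ × ℕ) =>
          (∀ p ∈ Q, ∀ i j k : ℕ, 1 ≤ i → i ≤ p.1 → 1 ≤ j → j ≤ p.2.1 →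
            1 ≤ k → k ≤ p.2.2 → (i, j, k) ∈ Q) ∧
          (∀ h i j : ℕ, 1 ≤ h → h < i → (∃ k, (i, j, k) ∈ Q) →
            colHeight Q i j < colHeight Q h j) ∧
          (∀ i j : ℕ, (∃ k, (i, j, k) ∈ Q) → Odd (colHeight Q i j)))),
      q ^ Q.card) =
    ∑ f ∈ Finset.univ.filter
        (fun f : Fin n → Fin (m + 1) => ∀ i j : Fin n, i ≤ j → f j ≤ f i),
      schur (fun i => (f i : ℕ)) (fun i => q ^ (2 * (n - 1 - (i : ℕ)) + 1)) := by
  classical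
  -- rewrite the right-hand side as a sum over a sigma finset
  have hR : ∀ f : Fin n → Fin (m + 1),
      schur (fun i => (f i : ℕ)) (fun i => q ^ (2 * (n - 1 - (i : ℕ)) + 1))
        = ∑ T ∈ Finset.univ.filter
            (fun T : ((i : Fin n) × Fin ((f i : ℕ))) → Fin n =>
              (∀ (i : Fin n) (j j' : Fin ((f i : ℕ))),
                (j : ℕ) ≤ (j' : ℕ) → T ⟨i, j⟩ ≤ T ⟨i, j'⟩) ∧
              (∀ (i i' : Fin n) (j : Fin ((f i : ℕ))) (j' : Fin ((f i' : ℕ))),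
                i < i' → (j : ℕ) = (j' : ℕ) → T ⟨i, j⟩ < T ⟨i', j'⟩)),
            q ^ (∑ c : (i : Fin n) × Fin ((f i : ℕ)), (2 * (n - 1 - (T c : ℕ)) + 1)) := by
    intro f
    rw [schur]
    exact Finset.sum_congr rfl
      (fun T _ => weight_eq T (fun a => 2 * (n - 1 - (a : ℕ)) + 1) q)
  rw [Finset.sum_congr rfl (fun f _ => hR f)]
  have hsig := Finset.sum_sigma
    (Finset.univ.filter (fun f : Fin n → Fin (m + 1) => ∀ i j : Fin n, i ≤ j → f j ≤ f i))
    (fun f => Finset.univ.filter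
      (fun T : ((i : Fin n) × Fin ((f i : ℕ))) → Fin n =>
        (∀ (i : Fin n) (j j' : Fin ((f i : ℕ))),
          (j : ℕ) ≤ (j' : ℕ) → T ⟨i, j⟩ ≤ T ⟨i, j'⟩) ∧
        (∀ (i i' : Fin n) (j : Fin ((f i : ℕ))) (j' : Fin ((f i' : ℕ))),
          i < i' → (j : ℕ) = (j' : ℕ) → T ⟨i, j⟩ < T ⟨i', j'⟩)))
    (fun p => q ^ (∑ c : (i : Fin n) × Fin ((p.fst i : ℕ)), (2 * (n - 1 - (p.snd c : ℕ)) + 1)))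
  rw [← hsig]
  refine Finset.sum_bij'
    (i := fun Q _ => (⟨fwdf Q m hn, fwdT Q m hn⟩ :
      Σ g : Fin n → Fin (m+1), ((i : Fin n) × Fin ((g i : ℕ))) → Fin n))
    (j := fun p _ => bwdQ p.1 p.2) ?_ ?_ ?_ ?_ ?_
  · -- forward map lands in the sigma set
    intro Q hQ
    rw [Finset.mem_filter, Finset.mem_powerset] at hQ
    obtain ⟨hbox, hclosed, hstrict, hodd⟩ := hQ
    have hb : Boxed m n Q := hbox
    rw [Finset.mem_sigma, Finset.mem_filter, Finset.mem_filter]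
    refine ⟨⟨Finset.mem_univ _, ?_⟩, Finset.mem_univ _, ?_, ?_⟩
    · -- antitone
      intro i j hij
      rw [Fin.le_def]
      simp only [fwdf_coe]
      exact fwdF_anti hb hclosed (by omega) (by have := Fin.le_def.1 hij; omega)
    · -- rows weakly increase
      rintro i ⟨j, hj⟩ ⟨j', hj'⟩ hjj
      simp only [fwdf_coe] at hj hj'
      rw [Fin.le_def]
      simp only [fwdT_coe, Fin.le_def] at hjj ⊢
      have hp' : 0 < colHeight Q ((i : ℕ)+1) (j'+1) :=
        (Hpos_iff hb hclosed).2 ⟨by omega, by omega⟩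
      have hp : 0 < colHeight Q ((i : ℕ)+1) (j+1) :=
        (Hpos_iff hb hclosed).2 ⟨by omega, by omega⟩
      have hmo : colHeight Q ((i : ℕ)+1) (j'+1) ≤ colHeight Q ((i : ℕ)+1) (j+1) :=
        Hmono_y hb hclosed (by omega) (by omega)
      obtain ⟨t, ht⟩ := hodd _ _ ((Hpos_ex hb hclosed).1 hp)
      obtain ⟨t', ht'⟩ := hodd _ _ ((Hpos_ex hb hclosed).1 hp')
      have h2n := Hle hb hclosed ((i : ℕ)+1) (j+1)
      omega
    · -- columns strictly increase
      rintro i i' ⟨j, hj⟩ ⟨j', hj'⟩ hii hjj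
      simp only [fwdf_coe] at hj hj'
      simp only [Fin.coe_eq_castSucc] at hjj
      rw [Fin.lt_def]
      simp only [fwdT_coe]
      try dsimp only at hjj
      have hii' : (i : ℕ) < (i' : ℕ) := hii
      have hp' : 0 < colHeight Q ((i' : ℕ)+1) (j'+1) :=
        (Hpos_iff hb hclosed).2 ⟨by omega, by omega⟩
      have hst : colHeight Q ((i' : ℕ)+1) (j'+1) < colHeight Q ((i : ℕ)+1) (j'+1) :=
        hstrict _ _ _ (by omega) (by omega) ((Hpos_ex hb hclosed).1 hp')
      have hp : 0 < colHeight Q ((i : ℕ)+1) (j'+1) := by omega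
      obtain ⟨t, ht⟩ := hodd _ _ ((Hpos_ex hb hclosed).1 hp)
      obtain ⟨t', ht'⟩ := hodd _ _ ((Hpos_ex hb hclosed).1 hp')
      have h2n := Hle hb hclosed ((i : ℕ)+1) (j'+1)
      have hjeq : j = j' := hjj
      subst hjeq
      omega
  · -- backward map lands in the plane-partition set
    rintro ⟨f, T⟩ hp
    rw [Finset.mem_sigma, Finset.mem_filter, Finset.mem_filter] at hp
    obtain ⟨⟨-, hf⟩, -, hT1, hT2⟩ := hp
    try dsimp only at hf hT1 hT2
    rw [Finset.mem_filter, Finset.mem_powerset]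
    exact ⟨bwd_boxed, bwd_closed hf hT1 hT2, bwd_strict hf hT1 hT2, bwd_odd hf hT1 hT2⟩
  · -- bwd ∘ fwd = id
    intro Q hQ
    rw [Finset.mem_filter, Finset.mem_powerset] at hQ
    obtain ⟨hbox, hclosed, hstrict, hodd⟩ := hQ
    have hb : Boxed m n Q := hbox
    ext ⟨x, y, z⟩
    rw [mem_bwdQ]
    constructor
    · rintro ⟨hx1, hy1, hz1, hx, hy, hz⟩
      simp only [fwdf_coe] at hy
      simp only [fwdT_coe] at hz
      try dsimp only at hy hz
      rw [show x - 1 + 1 = x by omega] at hy hz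
      rw [show y - 1 + 1 = y by omega] at hz
      have hpos : 0 < colHeight Q x y := (Hpos_iff hb hclosed).2 ⟨by omega, by omega⟩
      obtain ⟨t, ht⟩ := hodd _ _ ((Hpos_ex hb hclosed).1 hpos)
      have h2n := Hle hb hclosed x y
      rw [hmem hb hclosed]
      omega
    · intro hq
      have hzH := (hmem hb hclosed x y z).1 hq
      have hco := hb.co _ hq
      try dsimp only at hco
      have hpos : 0 < colHeight Q x y := by omega
      have hxn : x ≤ n := x_le_n hb hclosed hstrict hodd hpos
      have hyF : y ≤ fwdF Q m x := ((Hpos_iff hb hclosed).1 hpos).2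
      obtain ⟨t, ht⟩ := hodd _ _ ((Hpos_ex hb hclosed).1 hpos)
      have h2n := Hle hb hclosed x y
      have hx : x - 1 < n := by omega
      have hy : y - 1 < ((fwdf Q m hn) ⟨x-1, hx⟩ : ℕ) := by
        simp only [fwdf_coe]
        rw [show x - 1 + 1 = x by omega]
        omega
      have hz : z ≤ 2*(n - 1 - ((fwdT Q m hn) ⟨⟨x-1, hx⟩, ⟨y-1, hy⟩⟩ : ℕ)) + 1 := by
        simp only [fwdT_coe]
        try dsimp only
        rw [show x - 1 + 1 = x by omega, show y - 1 + 1 = y by omega]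
        omega
      exact ⟨hco.1, hco.2.1, hco.2.2, hx, hy, hz⟩
  · -- fwd ∘ bwd = id
    rintro ⟨f, T⟩ hp
    rw [Finset.mem_sigma, Finset.mem_filter, Finset.mem_filter] at hp
    obtain ⟨⟨-, hf⟩, -, hT1, hT2⟩ := hp
    try dsimp only at hf hT1 hT2
    have hfeq : fwdf (bwdQ f T) m hn = f := by
      funext i
      apply Fin.ext
      rw [fwdf_coe, fwdF_bwd hf hT1 hT2 i]
    apply sigma_mk_eq hfeq
    intro i j hj hj'
    apply Fin.ext
    rw [fwdT_coe]
    dsimp only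
    have hxx : (i : ℕ) + 1 - 1 < n := by have := i.isLt; omega
    have hyy : (j : ℕ) + 1 - 1 < (f ⟨(i : ℕ) + 1 - 1, hxx⟩ : ℕ) := hj'
    rw [bwd_colHeight_pos hf hT1 hT2 ((i : ℕ)+1) (j+1) (by omega) (by omega) hxx hyy]
    have hTeq : T ⟨⟨(i : ℕ)+1-1, hxx⟩, ⟨j+1-1, hyy⟩⟩ = T ⟨i, ⟨j, hj'⟩⟩ := rfl
    rw [hTeq]
    have := (T ⟨i, ⟨j, hj'⟩⟩).isLt
    omega
  · -- weights agree
    intro Q hQ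
    rw [Finset.mem_filter, Finset.mem_powerset] at hQ
    obtain ⟨hbox, hclosed, hstrict, hodd⟩ := hQ
    have hb : Boxed m n Q := hbox
    congr 1
    calc Q.card
        = ∑ x ∈ Finset.Icc 1 (2*n-1), ∑ y ∈ Finset.Icc 1 m, colHeight Q x y :=
          card_eq_sum hb
      _ = ∑ x ∈ Finset.Icc 1 n, ∑ y ∈ Finset.Icc 1 m, colHeight Q x y := by
          refine (Finset.sum_subset (Finset.Icc_subset_Icc_right (by omega)) ?_).symm
          intro x hx hnx
          rw [Finset.mem_Icc] at hx hnx
          apply Finset.sum_eq_zero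
          intro y _
          by_contra hcon
          have hpos : 0 < colHeight Q x y := by omega
          have := x_le_n hb hclosed hstrict hodd hpos
          omega
      _ = ∑ x ∈ Finset.Icc 1 n, ∑ y ∈ Finset.Icc 1 (fwdF Q m x), colHeight Q x y := by
          refine Finset.sum_congr rfl (fun x _ => ?_)
          refine (Finset.sum_subset (Finset.Icc_subset_Icc_right (fwdF_le Q m x)) ?_).symm
          intro y hy hny
          rw [Finset.mem_Icc] at hy hny
          by_contra hcon
          have hpos : 0 < colHeight Q x y := by omega
          have := ((Hpos_iff hb hclosed).1 hpos).2
          omega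
      _ = ∑ i : Fin n, ∑ y ∈ Finset.Icc 1 (fwdF Q m ((i : ℕ)+1)),
            colHeight Q ((i : ℕ)+1) y :=
          sum_Icc_one n _
      _ = ∑ i : Fin n, ∑ j : Fin (fwdF Q m ((i : ℕ)+1)),
            colHeight Q ((i : ℕ)+1) ((j : ℕ)+1) :=
          Finset.sum_congr rfl (fun i _ => sum_Icc_one _ _)
      _ = ∑ i : Fin n, ∑ j : Fin (fwdF Q m ((i : ℕ)+1)),
            (2 * (n - 1 - (n - 1 - colHeight Q ((i : ℕ)+1) ((j : ℕ)+1) / 2)) + 1) := by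
          refine Finset.sum_congr rfl (fun i _ => Finset.sum_congr rfl (fun j _ => ?_))
          have hpos : 0 < colHeight Q ((i : ℕ)+1) ((j : ℕ)+1) :=
            (Hpos_iff hb hclosed).2 ⟨by omega, by have := j.isLt; omega⟩
          obtain ⟨t, ht⟩ := hodd _ _ ((Hpos_ex hb hclosed).1 hpos)
          have h2n := Hle hb hclosed ((i : ℕ)+1) ((j : ℕ)+1)
          omega
      _ = ∑ c : (i : Fin n) × Fin ((fwdf Q m hn i : ℕ)),
            (2 * (n - 1 - (fwdT Q m hn c : ℕ)) + 1) := by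
          rw [← Finset.univ_sigma_univ, Finset.sum_sigma]
          rfl
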